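/- (Growth of knowledge in D-connected time-varying networks.) Let (E_t)_{t∈ℕ} be a D-connected time-varying graph on a finite vertex set V with |V| = n ≥ 2, and define flooding knowledge sets K_v(t) as usual. Fix a vertex u and let A_u(t) = {v ∈ V : u ∈ K_v(t)} be the set of nodes that know u's initial value after t rounds. Then A_u(t) ⊆ A_u(t+1) for all t, and whenever A_u(t) ≠ V one has A_u(t) ⊊ A_u(t + D); that is, at least one additional node learns u's value during every window of D consecutive rounds. -/
import Mathlib


/-- Flooding knowledge sets on a time-varying graph `E : ℕ → SimpleGraph V`:
`K v 0 = {v}` and `K v (t+1) = K v t ∪ ⋃_{w ∈ N_t(v)} K w t`. -/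
def tvFloodKnow {V : Type*} (E : ℕ → SimpleGraph V) : ℕ → V → Set V
  | 0, v => {v}
  | (t+1), v => tvFloodKnow E t v ∪ ⋃ w ∈ (E t).neighborSet v, tvFloodKnow E t w

/-- A time-varying graph is `D`-connected if, for every `t`, the union of the edge sets
appearing in the window `[t, t+D)` forms a connected graph. -/
def DConnected {V : Type*} (E : ℕ → SimpleGraph V) (D : ℕ) : Prop :=
  ∀ t : ℕ, (⨆ s ∈ Set.Ico t (t + D), E s).Connected

lemma tvFloodKnow_mono_step {V : Type*} (E : ℕ → SimpleGraph V) (t : ℕ) (v : V) :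
    tvFloodKnow E t v ⊆ tvFloodKnow E (t+1) v := by
  intro x hx
  exact Set.mem_union_left _ hx

lemma tvFloodKnow_mono {V : Type*} (E : ℕ → SimpleGraph V) {s t : ℕ} (h : s ≤ t) (v : V) :
    tvFloodKnow E s v ⊆ tvFloodKnow E t v := by
  induction t with
  | zero => simp_all
  | succ n ih =>
    rcases Nat.lt_or_ge s (n+1) with h' | h'
    · exact (ih (Nat.lt_succ_iff.mp h')).trans (tvFloodKnow_mono_step E n v)
    · have : s = n + 1 := le_antisymm h h'
      subst this; exact subset_rfl

lemma tvFloodKnow_self {V : Type*} (E : ℕ → SimpleGraph V) (t : ℕ) (v : V) :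
    v ∈ tvFloodKnow E t v :=
  tvFloodKnow_mono E (Nat.zero_le t) v rfl

lemma tvFloodKnow_of_adj {V : Type*} (E : ℕ → SimpleGraph V) {t : ℕ} {v w : V}
    (h : (E t).Adj v w) : tvFloodKnow E t w ⊆ tvFloodKnow E (t+1) v := by
  intro x hx
  refine Set.mem_union_right _ ?_
  exact Set.mem_biUnion (by exact h) hx

lemma walk_cross {V : Type*} {G : SimpleGraph V} {S : Set V} {a b : V}
    (p : G.Walk a b) (ha : a ∈ S) (hb : b ∉ S) :
    ∃ x y, x ∈ S ∧ y ∉ S ∧ G.Adj x y := by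
  induction p with
  | nil => exact absurd ha hb
  | cons h p ih =>
    rename_i a c b
    by_cases hc : c ∈ S
    · exact ih hc hb
    · exact ⟨a, c, ha, hc, h⟩

/-- Growth of knowledge in `D`-connected time-varying networks: the set
`A_u(t) = {v : u ∈ K v t}` of nodes knowing `u`'s initial value is nondecreasing in `t`,
and strictly grows over every window of `D` consecutive rounds while it is not yet all
of `V`. -/
theorem tvFloodKnow_growth {V : Type*} [Fintype V] (E : ℕ → SimpleGraph V)
    (D : ℕ) (hD : 1 ≤ D) (hconn : DConnected E D)
    (hcard : 2 ≤ Fintype.card V) (u : V) :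
    (∀ t : ℕ, {v : V | u ∈ tvFloodKnow E t v} ⊆ {v : V | u ∈ tvFloodKnow E (t+1) v}) ∧
    (∀ t : ℕ, {v : V | u ∈ tvFloodKnow E t v} ≠ Set.univ →
      {v : V | u ∈ tvFloodKnow E t v} ⊂ {v : V | u ∈ tvFloodKnow E (t + D) v}) := by
  constructor
  · intro t v hv
    exact tvFloodKnow_mono_step E t v hv
  · intro t hne
    refine ⟨fun v hv => tvFloodKnow_mono E (Nat.le_add_right t D) v hv, fun hsub => ?_⟩
    obtain ⟨b, hb⟩ : ∃ b, b ∉ {v : V | u ∈ tvFloodKnow E t v} := by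
      by_contra h
      push_neg at h
      exact hne (Set.eq_univ_of_forall h)
    have hu : u ∈ {v : V | u ∈ tvFloodKnow E t v} := tvFloodKnow_self E t u
    obtain ⟨p⟩ := (hconn t).preconnected u b
    obtain ⟨x, y, hx, hy, hadj⟩ := walk_cross p hu hb
    have : ∃ s ∈ Set.Ico t (t + D), (E s).Adj x y := by
      have := hadj
      simp only [SimpleGraph.iSup_adj] at this
      exact this.imp fun s h => exists_prop.mp h
    obtain ⟨s, hs, hsadj⟩ := this
    have hxs : u ∈ tvFloodKnow E s x := tvFloodKnow_mono E hs.1 x hx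
    have hy1 : u ∈ tvFloodKnow E (s+1) y :=
      tvFloodKnow_of_adj E hsadj.symm hxs
    have hyD : u ∈ tvFloodKnow E (t + D) y :=
      tvFloodKnow_mono E (by have := hs.2; omega : s + 1 ≤ t + D) y hy1
    exact hy (hsub hyD)
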